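/- arXiv:1901.08869 — 3 statements merged into one kernel-verified Lean document; each statement's English description precedes it below -/
import Mathlib

section
/- Let A be a finite-dimensional associative algebra over a field K graded by an arbitrary group G. Suppose that either char K = 0 or char K > dim_K A. Then the Jacobson radical J(A) is a graded ideal of A, i.e., J(A) = ⊕_{g∈G} (J(A) ∩ A_g). -/
/-!
Under the characteristic assumption, `x ∈ J(A)` if and only if `tr(L_{bx}) = 0` for every `b`,
where `L_c` is left multiplication by `c`. Elements of `J(A)` are nilpotent, hence so are the
`L_{bx}`. Conversely, the condition makes every positive power of `L_{yx}` traceless, because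
`(yx)^(k+1) = (y(xy)^k)x`; in characteristic `0` or `> dim A` this forces `L_{yx}`, hence `yx`,
to be nilpotent, so `1 + yx` is invertible for all `y`.

Thus `J(A)` is the right kernel of the trace form `(a, b) ↦ tr(L_{ab})`. Left multiplication by
a homogeneous element of degree `k ≠ 1` maps each `A_g` into `A_{kg}` with `kg ≠ g`, so it is
traceless: the trace form pairs `A_g` only with `A_{g⁻¹}`, and the kernel of such a form is
graded.
-/

open Module LinearMap DirectSum

theorem Nat.cast_ne_zero_of_le_of_lt_ringChar {R : Type*} [NonAssocSemiring R] {n d : ℕ}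
    (hR : CharZero R ∨ n < ringChar R) (hd : d ≠ 0) (hdn : d ≤ n) : (d : R) ≠ 0 := by
  rcases hR with hR | hR
  · exact Nat.cast_ne_zero.mpr hd
  · rw [Ne, ringChar.spec]
    exact fun hdvd => (Nat.le_of_dvd (Nat.pos_of_ne_zero hd) hdvd).not_gt (hdn.trans_lt hR)

theorem Commute.isNilpotent_pow_sub_pow {R : Type*} [Ring R] {a b : R} (hab : Commute a b)
    (h : IsNilpotent (a - b)) (k : ℕ) : IsNilpotent (a ^ k - b ^ k) := by
  rw [← hab.mul_geom_sum₂ k]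
  have ha : Commute (a - b) a := (Commute.refl a).sub_left hab.symm
  have hb : Commute (a - b) b := hab.sub_left (Commute.refl b)
  exact Commute.isNilpotent_mul_right
    (Commute.sum_right _ _ _ fun _ _ => (ha.pow_right _).mul_right (hb.pow_right _)) h

theorem Finset.eq_zero_of_forall_sum_mul_pow_eq_zero {R : Type*} [CommRing R] [IsDomain R]
    (s : Finset R) (c : R → R) (h : ∀ i < s.card, ∑ μ ∈ s, c μ * μ ^ i = 0) :
    ∀ μ ∈ s, c μ = 0 := by
  set e := s.equivFin
  have hzero : (fun j => c (e.symm j)) = 0 := by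
    refine Matrix.eq_zero_of_forall_pow_sum_mul_pow_eq_zero (f := fun j => (e.symm j : R))
      (fun i j hij => e.symm.injective (Subtype.ext hij)) fun i => ?_
    rw [← h i i.2, ← Finset.sum_coe_sort s]
    exact Fintype.sum_equiv e.symm _ _ fun _ => rfl
  intro μ hμ
  simpa using congrFun hzero (e ⟨μ, hμ⟩)

namespace Module.End

variable {K V : Type*} [Field K] [AddCommGroup V] [Module K V] [FiniteDimensional K V]

theorem trace_pow_restrict_maxGenEigenspace (f : End K V) (μ : K) (k : ℕ) :
    trace K _ ((f ^ k).restrict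
        (f.mapsTo_maxGenEigenspace_of_comm ((Commute.refl f).pow_right k) μ)) =
      finrank K (f.maxGenEigenspace μ) * μ ^ k := by
  have hf := f.mapsTo_maxGenEigenspace_of_comm rfl μ
  have hnil : IsNilpotent (f.restrict hf - algebraMap K _ μ) :=
    f.isNilpotent_restrict_maxGenEigenspace_sub_algebraMap μ
  have hnil_pow : IsNilpotent ((f.restrict hf) ^ k - algebraMap K _ (μ ^ k)) := by
    rw [map_pow]
    exact (Algebra.commute_algebraMap_right μ _).isNilpotent_pow_sub_pow hnil k
  have h := trace_comp_eq_mul_of_commute_of_isNilpotent _ (Commute.one_left _) hnil_pow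
  rw [Module.End.one_eq_id, LinearMap.id_comp, trace_id, mul_comm] at h
  rw [← h, Module.End.pow_restrict k hf]

theorem isNilpotent_of_forall_trace_pow_eq_zero_of_isAlgClosed [IsAlgClosed K]
    (hK : ∀ d : ℕ, d ≠ 0 → d ≤ finrank K V → (d : K) ≠ 0) (f : End K V)
    (h : ∀ k, 0 < k → trace K V (f ^ k) = 0) : IsNilpotent f := by
  classical
  have hfin : {μ | f.maxGenEigenspace μ ≠ ⊥}.Finite :=
    WellFoundedGT.finite_ne_bot_of_iSupIndep f.independent_maxGenEigenspace
  have hint : IsInternal f.maxGenEigenspace :=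
    isInternal_submodule_of_iSupIndep_of_iSup_eq_top f.independent_maxGenEigenspace
      f.iSup_maxGenEigenspace_eq_top
  -- `tr (f ^ k) = ∑ μ, dim V_μ * μ ^ k`; Vandermonde kills `dim V_μ` in `K` for `μ ≠ 0`.
  have hpow_sum : ∀ i, ∑ μ ∈ hfin.toFinset.erase 0,
      (finrank K (f.maxGenEigenspace μ) * μ) * μ ^ i = 0 := by
    intro i
    rw [Finset.sum_erase _ (by simp), ← h (i + 1) i.succ_pos,
      trace_eq_sum_trace_restrict' hint hfin
        fun μ => f.mapsTo_maxGenEigenspace_of_comm ((Commute.refl f).pow_right _) μ]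
    refine Finset.sum_congr rfl fun μ _ => ?_
    rw [trace_pow_restrict_maxGenEigenspace, pow_succ', mul_assoc]
  have hbot : ∀ μ ≠ 0, f.maxGenEigenspace μ = ⊥ := by
    intro μ hμ
    by_contra hne
    have hμs : μ ∈ hfin.toFinset.erase 0 := by simp [hμ, hne]
    have := Finset.eq_zero_of_forall_sum_mul_pow_eq_zero _ _ (fun i _ => hpow_sum i) μ hμs
    exact hK _ (mt Submodule.finrank_eq_zero.mp hne) (Submodule.finrank_le _)
      (by simpa [hμ] using this)
  have htop : f.maxGenEigenspace 0 = ⊤ := by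
    rw [← f.iSup_maxGenEigenspace_eq_top]
    refine le_antisymm (le_iSup _ 0) (iSup_le fun μ => ?_)
    rcases eq_or_ne μ 0 with rfl | hμ
    · exact le_rfl
    · simp [hbot μ hμ]
  refine ((LinearMap.charpoly_nilpotent_tfae f).out 0 3).mpr ?_
  rw [← finrank_maxGenEigenspace_zero_eq, htop, finrank_top]

theorem isNilpotent_of_forall_trace_pow_eq_zero
    (hK : ∀ d : ℕ, d ≠ 0 → d ≤ finrank K V → (d : K) ≠ 0) (f : End K V)
    (h : ∀ k, 0 < k → trace K V (f ^ k) = 0) : IsNilpotent f := by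
  -- Both traces and nilpotency (via the characteristic polynomial) survive base change.
  let L := AlgebraicClosure K
  have hL : IsNilpotent (f.baseChange L) := by
    refine isNilpotent_of_forall_trace_pow_eq_zero_of_isAlgClosed (fun d hd hdn => ?_) _
      fun k hk => ?_
    · rw [← map_natCast (algebraMap K L)]
      exact (map_ne_zero _).mpr (hK d hd (by simpa using hdn))
    · rw [← baseChange_pow, trace_baseChange, h k hk, map_zero]
  rw [isNilpotent_iff_charpoly] at hL ⊢
  rw [charpoly_baseChange, finrank_baseChange] at hL
  exact Polynomial.map_injective _ (algebraMap K L).injective (by simpa using hL)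

end Module.End

theorem IsArtinianRing.isNilpotent_of_mem_jacobson_bot {R : Type*} [Ring R] [IsArtinianRing R]
    {x : R} (hx : x ∈ (⊥ : Ideal R).jacobson) : IsNilpotent x := by
  obtain ⟨n, hn⟩ := IsArtinianRing.isNilpotent_jacobson_bot (R := R)
  exact ⟨n, by simpa [hn] using Ideal.pow_mem_pow hx n⟩

theorem Submodule.eq_iSup_inf_of_isHomogeneous {ι R M : Type*} [DecidableEq ι] [Semiring R]
    [AddCommMonoid M] [Module R M] (ℬ : ι → Submodule R M) [Decomposition ℬ]
    {p : Submodule R M} (hp : SetLike.IsHomogeneous ℬ p) : p = ⨆ i, p ⊓ ℬ i := by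
  classical
  refine le_antisymm (fun x hx => ?_) (iSup_le fun _ => inf_le_left)
  rw [← sum_support_decompose ℬ x]
  exact Submodule.sum_mem _ fun i _ =>
    Submodule.mem_iSup_of_mem i ⟨hp i hx, (decompose ℬ x i).2⟩

theorem LinearMap.isHomogeneous_ker_flip_of_apply_eq_zero_of_mul_ne_one {G R M N : Type*}
    [Group G] [DecidableEq G] [CommSemiring R] [AddCommMonoid M] [Module R M]
    [AddCommMonoid N] [Module R N] (ℬ : G → Submodule R M) [Decomposition ℬ]
    (B : M →ₗ[R] M →ₗ[R] N)
    (hB : ∀ g h, g * h ≠ 1 → ∀ a ∈ ℬ g, ∀ b ∈ ℬ h, B a b = 0) :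
    SetLike.IsHomogeneous ℬ (ker B.flip) := by
  classical
  intro h x hx
  rw [mem_ker] at hx ⊢
  refine decompose_lhom_ext ℬ fun g => LinearMap.ext fun ⟨b, hb⟩ => ?_
  simp only [coe_comp, Submodule.coe_subtype, Function.comp_apply, flip_apply,
    LinearMap.zero_apply]
  by_cases hgh : g * h = 1
  · calc B b (decompose ℬ x h)
          = ∑ h' ∈ (decompose ℬ x).support, B b (decompose ℬ x h') := by
          refine (Finset.sum_eq_single h (fun h' _ hh' => hB g h' ?_ b hb _ (decompose ℬ x h').2)
            fun hh => ?_).symm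
          · exact fun h' => hh' (mul_left_cancel (h'.trans hgh.symm))
          · rw [DFinsupp.notMem_support_iff.mp hh, ZeroMemClass.coe_zero, map_zero]
      _ = B.flip x b := by rw [flip_apply, ← map_sum, sum_support_decompose]
      _ = 0 := by rw [hx, LinearMap.zero_apply]
  · exact hB g h hgh b hb _ (decompose ℬ x h).2

section TraceForm

variable (K A : Type*) [Field K] [Ring A] [Algebra K A]

noncomputable def lmulTraceForm : A →ₗ[K] A →ₗ[K] K :=
  (LinearMap.mul K A).compr₂ (trace K A ∘ₗ LinearMap.mul K A)

variable {K A}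

@[simp]
theorem lmulTraceForm_apply (a b : A) :
    lmulTraceForm K A a b = trace K A (mulLeft K (a * b)) :=
  rfl

variable [FiniteDimensional K A]

theorem mem_ker_flip_lmulTraceForm_of_mem_jacobson_bot {x : A}
    (hx : x ∈ (⊥ : Ideal A).jacobson) : x ∈ ker (lmulTraceForm K A).flip := by
  have : IsArtinianRing A := .of_finite K A
  refine mem_ker.mpr (LinearMap.ext fun b => ?_)
  have hnil := IsArtinianRing.isNilpotent_of_mem_jacobson_bot (Ideal.mul_mem_left _ b hx)
  rw [flip_apply, lmulTraceForm_apply, LinearMap.zero_apply]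
  exact (isNilpotent_trace_of_isNilpotent (hnil.map (Algebra.lmul K A))).eq_zero

theorem mem_jacobson_bot_of_mem_ker_flip_lmulTraceForm
    (hK : ∀ d : ℕ, d ≠ 0 → d ≤ finrank K A → (d : K) ≠ 0) {x : A}
    (hx : x ∈ ker (lmulTraceForm K A).flip) : x ∈ (⊥ : Ideal A).jacobson := by
  refine Ideal.mem_jacobson_iff.mpr fun y => ?_
  have htrace : ∀ k, 0 < k → trace K A (mulLeft K (y * x) ^ k) = 0 := by
    intro k hk
    obtain ⟨k, rfl⟩ := Nat.exists_eq_add_of_lt hk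
    rw [pow_mulLeft, zero_add, pow_succ, ← mul_assoc, mul_pow_mul, ← lmulTraceForm_apply,
      ← flip_apply, mem_ker.mp hx, LinearMap.zero_apply]
  have hnil : IsNilpotent (y * x) := (IsNilpotent.map_iff (Algebra.lmul_injective (R := K))).mp
    (Module.End.isNilpotent_of_forall_trace_pow_eq_zero hK _ htrace)
  obtain ⟨u, hu⟩ := hnil.isUnit_add_one
  refine ⟨↑u⁻¹, ?_⟩
  rw [Ideal.mem_bot, mul_assoc, ← mul_add_one (↑u⁻¹ : A), ← hu, Units.inv_mul, sub_self]

theorem jacobson_bot_restrictScalars_eq_ker_flip_lmulTraceForm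
    (hK : ∀ d : ℕ, d ≠ 0 → d ≤ finrank K A → (d : K) ≠ 0) :
    (⊥ : Ideal A).jacobson.restrictScalars K = ker (lmulTraceForm K A).flip :=
  le_antisymm (fun _ => mem_ker_flip_lmulTraceForm_of_mem_jacobson_bot)
    (fun _ => mem_jacobson_bot_of_mem_ker_flip_lmulTraceForm hK)

theorem lmulTraceForm_apply_eq_zero_of_mul_ne_one {G : Type*} [Group G] [DecidableEq G]
    (ℬ : G → Submodule K A) (hℬ : IsInternal ℬ)
    (hmul : ∀ (g h : G), ∀ a ∈ ℬ g, ∀ b ∈ ℬ h, a * b ∈ ℬ (g * h))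
    {g h : G} (hgh : g * h ≠ 1) {a b : A} (ha : a ∈ ℬ g) (hb : b ∈ ℬ h) :
    lmulTraceForm K A a b = 0 :=
  trace_eq_zero_of_mapsTo_ne hℬ (g * h * ·) (fun _ => by simpa using hgh)
    fun _ _ hc => hmul _ _ _ (hmul g h a ha b hb) _ hc

end TraceForm

/-- Gordienko: over a field `K` with `char K = 0` or `char K > dim_K A`, the
Jacobson radical of a finite-dimensional associative `G`-graded algebra `A` is a graded
ideal, i.e. `J(A) = ⊕_{g ∈ G} (J(A) ∩ A_g)`. -/
theorem jacobson_radical_is_graded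
    {G : Type*} [Group G] [DecidableEq G] {K : Type*} [Field K]
    {A : Type*} [Ring A] [Algebra K A] [FiniteDimensional K A]
    (ℬ : G → Submodule K A)
    (hinternal : DirectSum.IsInternal ℬ)
    (hmul : ∀ (g h : G), ∀ a ∈ ℬ g, ∀ b ∈ ℬ h, a * b ∈ ℬ (g * h))
    (hchar : CharZero K ∨ Module.finrank K A < ringChar K) :
    ((⊥ : Ideal A).jacobson).restrictScalars K =
      ⨆ g : G, (((⊥ : Ideal A).jacobson).restrictScalars K ⊓ ℬ g) := by
  let _ := hinternal.chooseDecomposition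
  have hK : ∀ d : ℕ, d ≠ 0 → d ≤ finrank K A → (d : K) ≠ 0 :=
    fun _ => Nat.cast_ne_zero_of_le_of_lt_ringChar hchar
  have hhom : SetLike.IsHomogeneous ℬ ((⊥ : Ideal A).jacobson.restrictScalars K) := by
    rw [jacobson_bot_restrictScalars_eq_ker_flip_lmulTraceForm hK]
    exact isHomogeneous_ker_flip_of_apply_eq_zero_of_mul_ne_one ℬ _ fun _ _ hgh _ ha _ hb =>
      lmulTraceForm_apply_eq_zero_of_mul_ne_one ℬ hinternal hmul hgh ha hb
  exact Submodule.eq_iSup_inf_of_isHomogeneous ℬ hhom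
end

section
/- Let D and D' be finite-dimensional G-graded division algebras over a field K with dim_K D = d² and dim_K D' = (d')², and let V be a nonzero finite-dimensional G-graded (D,D')-bimodule (so D_g V_h ⊆ V_{gh} and V_g D'_h ⊆ V_{gh}) with dim_K V = d·d'. Then d = d', and for every nonzero homogeneous v ∈ V one has V = D·v = v·D'; in particular V is free of rank 1 as a left D-module and as a right D'-module. -/
/-!
If `v ≠ 0` is homogeneous, write `a = ∑ a_g` with `a_g ∈ D_g`; the terms `a_g • v` lie in the
distinct components `V_{g h}`, so `a • v = 0` forces every `a_g • v = 0`, hence `a_g = 0` since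
nonzero homogeneous elements are units. Thus `a ↦ a • v` and likewise `b ↦ v • b` are injective,
giving `d² ≤ d d'` and `d'² ≤ d d'`, so `d = d'`; both maps are then injective between spaces of
the same dimension, hence bijective.
-/

open MulOpposite

theorem LinearMap.injective_of_iSup_eq_top_of_iSupIndep {ι R M N : Type*} [DecidableEq ι]
    [Ring R] [AddCommGroup M] [Module R M] [AddCommGroup N] [Module R N]
    {𝒜 : ι → Submodule R M} {ℬ : ι → Submodule R N} (h𝒜 : iSup 𝒜 = ⊤) (hℬ : iSupIndep ℬ)
    (f : M →ₗ[R] N) (hmaps : ∀ i, ∀ x ∈ 𝒜 i, f x ∈ ℬ i)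
    (hker : ∀ i, ∀ x ∈ 𝒜 i, f x = 0 → x = 0) :
    Function.Injective f := by
  let fᵢ : (Π₀ i, 𝒜 i) →ₗ[R] Π₀ i, ℬ i :=
    DFinsupp.mapRange.linearMap fun i => f.restrict (hmaps i)
  have hfᵢ : Function.Injective fᵢ :=
    (DFinsupp.mapRange_injective _ fun _ => map_zero _).mpr fun i =>
      (injective_restrict_iff _).mpr <| Submodule.disjoint_def.mpr (hker i)
  have hcomm : f ∘ₗ DFinsupp.lsum ℕ (fun i => (𝒜 i).subtype) =
      DFinsupp.lsum ℕ (fun i => (ℬ i).subtype) ∘ₗ fᵢ := by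
    ext i x; simp [fᵢ]
  refine Function.Injective.of_comp_right (g := DFinsupp.lsum ℕ fun i => (𝒜 i).subtype) ?_ ?_
  · rw [← LinearMap.coe_comp, hcomm, LinearMap.coe_comp]
    exact hℬ.dfinsupp_lsum_injective.comp hfᵢ
  · rw [← LinearMap.range_eq_top, ← Submodule.iSup_eq_range_dfinsupp_lsum, h𝒜]

theorem Submodule.exists_mem_ne_zero_of_iSup_eq_top {ι R M : Type*} [Semiring R]
    [AddCommMonoid M] [Module R M] [Nontrivial M] {p : ι → Submodule R M} (h : iSup p = ⊤) :
    ∃ i, ∃ v ∈ p i, v ≠ 0 := by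
  by_contra! H
  have : iSup p = ⊥ := iSup_eq_bot.mpr fun i => (Submodule.eq_bot_iff _).mpr (H i)
  exact bot_ne_top (this.symm.trans h)

theorem LinearMap.bijective_of_injective_of_finrank_eq {K V W : Type*} [DivisionRing K]
    [AddCommGroup V] [Module K V] [AddCommGroup W] [Module K W] [FiniteDimensional K W]
    (f : V →ₗ[K] W) (hf : Function.Injective f) (h : Module.finrank K V = Module.finrank K W) :
    Function.Bijective f :=
  have := FiniteDimensional.of_injective f hf
  ⟨hf, (injective_iff_surjective_of_finrank_eq_finrank h).mp hf⟩

theorem graded_bimodule_cyclic_general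
    {G : Type*} [Group G] [DecidableEq G] {K : Type*} [Field K]
    {D : Type*} [Ring D] [Algebra K D]
    {D' : Type*} [Ring D'] [Algebra K D']
    {V : Type*} [AddCommGroup V] [Module K V] [FiniteDimensional K V]
    [Module D V] [Module D'ᵐᵒᵖ V]
    [IsScalarTower K D V] [IsScalarTower K D'ᵐᵒᵖ V]
    (d d' : ℕ)
    (𝒟 : G → Submodule K D) (𝒟' : G → Submodule K D') (𝒱 : G → Submodule K V)
    -- `D` is a graded division algebra with `dim_K D = d²`
    (hDint : DirectSum.IsInternal 𝒟)
    (hDdiv : ∀ (g : G), ∀ x ∈ 𝒟 g, x ≠ 0 → IsUnit x)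
    (hDdim : Module.finrank K D = d ^ 2)
    -- `D'` is a graded division algebra with `dim_K D' = d'²`
    (hD'int : DirectSum.IsInternal 𝒟')
    (hD'div : ∀ (g : G), ∀ x ∈ 𝒟' g, x ≠ 0 → IsUnit x)
    (hD'dim : Module.finrank K D' = d' ^ 2)
    -- `V` is a nonzero graded `(D,D')`-bimodule with `dim_K V = d·d'`
    (hVint : DirectSum.IsInternal 𝒱)
    (hVl : ∀ (g h : G), ∀ x ∈ 𝒟 g, ∀ w ∈ 𝒱 h, x • w ∈ 𝒱 (g * h))
    (hVr : ∀ (g h : G), ∀ w ∈ 𝒱 g, ∀ y ∈ 𝒟' h, (op y) • w ∈ 𝒱 (g * h))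
    (hVdim : Module.finrank K V = d * d')
    (hVne : ∃ w : V, w ≠ 0) :
    d = d' ∧
    ∀ (g : G) (v : V), v ∈ 𝒱 g → v ≠ 0 →
      (∀ z : V, ∃ a : D, a • v = z) ∧
      (∀ z : V, ∃ b : D', (op b) • v = z) ∧
      Function.Bijective (fun a : D => a • v) ∧
      Function.Bijective (fun b : D' => (op b) • v) := by
  let left (v : V) : D →ₗ[K] V := (LinearMap.toSpanSingleton D V v).restrictScalars K
  let right (v : V) : D' →ₗ[K] V :=
    (LinearMap.toSpanSingleton D'ᵐᵒᵖ V v).restrictScalars K ∘ₗ (opLinearEquiv K).toLinearMap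
  have left_injective (g : G) (v : V) (hv : v ∈ 𝒱 g) (hv0 : v ≠ 0) :
      Function.Injective (left v) :=
    (left v).injective_of_iSup_eq_top_of_iSupIndep hDint.submodule_iSup_eq_top
      (hVint.submodule_iSupIndep.comp (mul_left_injective g))
      (fun h a ha => hVl h g a ha v hv)
      fun h a ha hav => by_contra fun ha0 => hv0 ((hDdiv h a ha ha0).smul_eq_zero.mp hav)
  have right_injective (g : G) (v : V) (hv : v ∈ 𝒱 g) (hv0 : v ≠ 0) :
      Function.Injective (right v) :=
    (right v).injective_of_iSup_eq_top_of_iSupIndep hD'int.submodule_iSup_eq_top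
      (hVint.submodule_iSupIndep.comp (mul_right_injective g))
      (fun h b hb => hVr g h v hv b hb)
      fun h b hb hbv => by_contra fun hb0 => hv0 ((hD'div h b hb hb0).op.smul_eq_zero.mp hbv)
  obtain ⟨w, hw⟩ := hVne
  have : Nontrivial V := ⟨w, 0, hw⟩
  obtain ⟨g₀, v₀, hv₀, hv₀0⟩ :=
    Submodule.exists_mem_ne_zero_of_iSup_eq_top hVint.submodule_iSup_eq_top
  have hdd' : d = d' := by
    have h₁ := (left v₀).finrank_le_finrank_of_injective (left_injective g₀ v₀ hv₀ hv₀0)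
    have h₂ := (right v₀).finrank_le_finrank_of_injective (right_injective g₀ v₀ hv₀ hv₀0)
    rw [hDdim, hVdim] at h₁
    rw [hD'dim, hVdim] at h₂
    nlinarith
  refine ⟨hdd', fun g v hv hv0 => ?_⟩
  have bijL := (left v).bijective_of_injective_of_finrank_eq (left_injective g v hv hv0)
    (by rw [hDdim, hVdim, hdd', sq])
  have bijR := (right v).bijective_of_injective_of_finrank_eq (right_injective g v hv hv0)
    (by rw [hD'dim, hVdim, hdd', sq])
  exact ⟨bijL.2, bijR.2, bijL, bijR⟩

/-- let `D`, `D'` be finite-dimensional `G`-graded division algebras with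
`dim D = d²`, `dim D' = d'²`, and let `V` be a nonzero graded `(D,D')`-bimodule with
`dim V = d·d'`.  Then `d = d'`, and for every nonzero homogeneous `v ∈ V` one has
`V = D•v = v•D'`; in particular `V` is free of rank `1` as a left `D`-module and as a right
`D'`-module. -/
theorem graded_bimodule_cyclic
    {G : Type*} [Group G] [DecidableEq G] {K : Type*} [Field K]
    {D : Type*} [Ring D] [Algebra K D] [FiniteDimensional K D]
    {D' : Type*} [Ring D'] [Algebra K D'] [FiniteDimensional K D']
    {V : Type*} [AddCommGroup V] [Module K V] [FiniteDimensional K V]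
    [Module D V] [Module D'ᵐᵒᵖ V] [SMulCommClass D D'ᵐᵒᵖ V]
    [IsScalarTower K D V] [IsScalarTower K D'ᵐᵒᵖ V]
    (d d' : ℕ)
    (𝒟 : G → Submodule K D) (𝒟' : G → Submodule K D') (𝒱 : G → Submodule K V)
    -- `D` is a graded division algebra with `dim_K D = d²`
    (hDint : DirectSum.IsInternal 𝒟)
    (hDmul : ∀ (g h : G), ∀ a ∈ 𝒟 g, ∀ b ∈ 𝒟 h, a * b ∈ 𝒟 (g * h))
    (hDone : (1 : D) ∈ 𝒟 (1 : G))
    (hDdiv : ∀ (g : G), ∀ x ∈ 𝒟 g, x ≠ 0 → IsUnit x)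
    (hDdim : Module.finrank K D = d ^ 2)
    -- `D'` is a graded division algebra with `dim_K D' = d'²`
    (hD'int : DirectSum.IsInternal 𝒟')
    (hD'mul : ∀ (g h : G), ∀ a ∈ 𝒟' g, ∀ b ∈ 𝒟' h, a * b ∈ 𝒟' (g * h))
    (hD'one : (1 : D') ∈ 𝒟' (1 : G))
    (hD'div : ∀ (g : G), ∀ x ∈ 𝒟' g, x ≠ 0 → IsUnit x)
    (hD'dim : Module.finrank K D' = d' ^ 2)
    -- `V` is a nonzero graded `(D,D')`-bimodule with `dim_K V = d·d'`
    (hVint : DirectSum.IsInternal 𝒱)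
    (hVl : ∀ (g h : G), ∀ x ∈ 𝒟 g, ∀ w ∈ 𝒱 h, x • w ∈ 𝒱 (g * h))
    (hVr : ∀ (g h : G), ∀ w ∈ 𝒱 g, ∀ y ∈ 𝒟' h, (op y) • w ∈ 𝒱 (g * h))
    (hVdim : Module.finrank K V = d * d')
    (hVne : ∃ w : V, w ≠ 0) :
    d = d' ∧
    ∀ (g : G) (v : V), v ∈ 𝒱 g → v ≠ 0 →
      (∀ z : V, ∃ a : D, a • v = z) ∧
      (∀ z : V, ∃ b : D', (op b) • v = z) ∧
      Function.Bijective (fun a : D => a • v) ∧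
      Function.Bijective (fun b : D' => (op b) • v) :=
  graded_bimodule_cyclic_general d d' 𝒟 𝒟' 𝒱 hDint hDdiv hDdim hD'int hD'div hD'dim hVint hVl hVr
    hVdim hVne
end

section
/- Let K be a field, U = UT(n_1,…,n_t), and R = ⊕_{j=1}^t M_{1j} the first block row of U. Suppose u ∈ R is an idempotent (u² = u) which is a left unit of R (ux = x for all x ∈ R). Then u = E_1 + n for some n ∈ ⊕_{j=2}^t M_{1j} with n² = 0, and the inner automorphism φ of U given by φ(x) = (1−n) x (1+n) satisfies φ(E_1) = u; in particular there exists a K-algebra automorphism of U mapping u to E_1. -/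
set_option synthInstance.maxHeartbeats 1000000
set_option maxHeartbeats 1000000

open Matrix
open scoped TensorProduct

/-- The index type for block matrices with `t` blocks of sizes `n 0, …, n (t-1)`. -/
abbrev BIdx (t : ℕ) (n : Fin t → ℕ) := (i : Fin t) × Fin (n i)

/-- The algebra `UT(n 0, …, n (t-1))` of upper block triangular matrices over `K`, realized
as a subalgebra of the full matrix algebra. -/
def utAlg (K : Type*) [Field K] {t : ℕ} (n : Fin t → ℕ) :
    Subalgebra K (Matrix (BIdx t n) (BIdx t n) K) where
  carrier := {M | M.BlockTriangular fun p => p.1}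
  mul_mem' := fun ha hb => ha.mul hb
  one_mem' := Matrix.blockTriangular_one
  add_mem' := fun ha hb => ha.add hb
  zero_mem' := Matrix.blockTriangular_zero
  algebraMap_mem' := fun r => by
    simpa [Matrix.algebraMap_eq_diagonal] using
      Matrix.blockTriangular_diagonal (algebraMap K (BIdx t n → K) r)

/-- The matrix unit `e_{ij}` as an element of `utAlg K n`, for `i.1 ≤ j.1`. -/
def utE {K : Type*} [Field K] {t : ℕ} {n : Fin t → ℕ} (i j : BIdx t n) (hij : i.1 ≤ j.1) :
    utAlg K n :=
  ⟨Matrix.single i j 1, by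
    intro a b hab
    show Matrix.single i j (1 : K) a b = 0
    rw [Matrix.single]
    simp only [Matrix.of_apply, ite_eq_right_iff, and_imp]
    rintro rfl rfl
    exact absurd hij (not_le.mpr hab)⟩

/-- The homogeneous component of degree `x` of the tensor product grading on `utAlg K m ⊗ D`
determined by the sequence `η` (defining an elementary grading) and a grading `𝒟` on `D`:
it is spanned by the elements `e_{ij} ⊗ d` with `d` homogeneous of some degree `h` and
`η i * h * (η j)⁻¹ = x`. -/
def utTensorComp {G : Type*} [Group G] {K : Type*} [Field K] {t : ℕ} (m : Fin t → ℕ)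
    {D : Type*} [Ring D] [Algebra K D] (η : BIdx t m → G) (𝒟 : G → Submodule K D) (x : G) :
    Submodule K ((utAlg K m) ⊗[K] D) :=
  Submodule.span K {w | ∃ (i j : BIdx t m) (hij : i.1 ≤ j.1) (h : G) (d : D),
    d ∈ 𝒟 h ∧ η i * h * (η j)⁻¹ = x ∧ w = (utE i j hij) ⊗ₜ[K] d}

/-- The `(i,j)` block subspace `M_{ij}` of `utAlg K n`: the matrices supported on the
`n i × n j` block in position `(i,j)`. -/
def blockM (K : Type*) [Field K] {t : ℕ} (n : Fin t → ℕ) (i j : Fin t) :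
    Submodule K (utAlg K n) where
  carrier := {x | ∀ a b : BIdx t n, (a.1 ≠ i ∨ b.1 ≠ j) →
    (x : Matrix (BIdx t n) (BIdx t n) K) a b = 0}
  add_mem' := by
    intro x y hx hy a b h
    have hx' := hx a b h
    have hy' := hy a b h
    simp [Matrix.add_apply, hx', hy']
  zero_mem' := by intro a b h; simp
  smul_mem' := by
    intro c x hx a b h
    have hx' := hx a b h
    simp [Matrix.smul_apply, hx']

/-- The identity matrix `E_i` of the `i`-th diagonal block, as an element of `utAlg K n`. -/
def blockOne (K : Type*) [Field K] {t : ℕ} (n : Fin t → ℕ) (i : Fin t) : utAlg K n :=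
  ⟨Matrix.diagonal (fun p : BIdx t n => if p.1 = i then 1 else 0),
    Matrix.blockTriangular_diagonal _⟩

/-!
Writing `E = E_1`, the block row `R` is `E U`, so the left unit `u ∈ R` satisfies `E u = u`, and
`u E = E` because `E ∈ R`. Hence `N = u - E` satisfies `E N = N` and `N E = 0`: it lives in the
first block row with vanishing first block column, which together with block triangularity puts
it in `⊕_{j>1} M_{1j}`. Then `N² = N E N = 0`, so `1 - N` is a unit with inverse `1 + N`, and
`(1 - N) E (1 + N) = E + E N = u`.
-/

section SquareZero

variable {R A : Type*} [CommSemiring R] [Ring A] [Algebra R A] {e N : A}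

theorem mul_self_eq_zero_of_mul_eq_self_of_mul_eq_zero (heN : e * N = N) (hNe : N * e = 0) :
    N * N = 0 :=
  calc N * N = N * e * N := by rw [mul_assoc, heN]
    _ = 0 := by rw [hNe, zero_mul]

theorem one_sub_mul_mul_one_add_eq_add (heN : e * N = N) (hNe : N * e = 0) :
    (1 - N) * e * (1 + N) = e + N := by
  rw [sub_mul, one_mul, hNe, sub_zero, mul_add, mul_one, heN]

variable (N)

def Units.oneSubOfMulSelfEqZero (hN : N * N = 0) : Aˣ where
  val := 1 - N
  inv := 1 + N
  val_inv := by rw [sub_mul, one_mul, mul_add, mul_one, hN, add_zero, add_sub_cancel_right]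
  inv_val := by rw [add_mul, one_mul, mul_sub, mul_one, hN, sub_zero, sub_add_cancel]

variable (R)

def innerAutOneSub (hN : N * N = 0) : A ≃ₐ[R] A :=
  MulSemiringAction.toAlgAut (ConjAct Aˣ) R A
    (ConjAct.toConjAct (Units.oneSubOfMulSelfEqZero N hN))

theorem innerAutOneSub_apply (hN : N * N = 0) (x : A) :
    innerAutOneSub R N hN x = (1 - N) * x * (1 + N) :=
  ConjAct.units_smul_def _ x

end SquareZero

namespace utAlg

variable {K : Type*} [Field K] {t : ℕ} {n : Fin t → ℕ}

theorem blockOne_mul_apply (i : Fin t) (x : utAlg K n) (a b : BIdx t n) :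
    ((blockOne K n i * x : utAlg K n) : Matrix (BIdx t n) (BIdx t n) K) a b =
      if a.1 = i then (x : Matrix (BIdx t n) (BIdx t n) K) a b else 0 := by
  change (diagonal (fun p : BIdx t n => if p.1 = i then (1 : K) else 0) *
    (x : Matrix (BIdx t n) (BIdx t n) K)) a b = _
  rw [diagonal_mul]
  split_ifs <;> simp

theorem mul_blockOne_apply (i : Fin t) (x : utAlg K n) (a b : BIdx t n) :
    ((x * blockOne K n i : utAlg K n) : Matrix (BIdx t n) (BIdx t n) K) a b =
      if b.1 = i then (x : Matrix (BIdx t n) (BIdx t n) K) a b else 0 := by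
  change ((x : Matrix (BIdx t n) (BIdx t n) K) *
    diagonal (fun p : BIdx t n => if p.1 = i then (1 : K) else 0)) a b = _
  rw [mul_diagonal]
  split_ifs <;> simp

theorem blockOne_mul_blockOne (i : Fin t) : blockOne K n i * blockOne K n i = blockOne K n i := by
  ext a b
  rw [blockOne_mul_apply]
  split_ifs with ha
  · rfl
  · change 0 = diagonal (fun p : BIdx t n => if p.1 = i then (1 : K) else 0) a b
    rcases eq_or_ne a b with rfl | hab
    · simp [ha]
    · exact (diagonal_apply_ne _ hab).symm

theorem blockOne_mem_iSup_blockM (i : Fin t) : blockOne K n i ∈ ⨆ j, blockM K n i j := by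
  refine Submodule.mem_iSup_of_mem i fun a b hab => ?_
  change diagonal (fun p : BIdx t n => if p.1 = i then (1 : K) else 0) a b = 0
  rcases eq_or_ne a b with rfl | hne
  · rcases hab with h | h <;> simp [h]
  · exact diagonal_apply_ne _ hne

theorem blockOne_mul_of_mem_iSup_blockM {i : Fin t} {x : utAlg K n}
    (hx : x ∈ ⨆ j, blockM K n i j) : blockOne K n i * x = x := by
  refine Submodule.iSup_induction _ (motive := fun y => blockOne K n i * y = y) hx
    (fun j y hy => ?_) (mul_zero _) fun y z hy hz => by rw [mul_add, hy, hz]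
  ext a b
  rw [blockOne_mul_apply]
  split_ifs with ha
  · rfl
  · exact (hy a b (Or.inl ha)).symm

def blockPart (x : utAlg K n) (i j : Fin t) : utAlg K n :=
  ⟨of fun a b => if a.1 = i ∧ b.1 = j then (x : Matrix (BIdx t n) (BIdx t n) K) a b else 0,
    fun a b hab => by simp [x.2 hab]⟩

theorem blockPart_mem_blockM (x : utAlg K n) (i j : Fin t) : blockPart x i j ∈ blockM K n i j :=
  fun _ _ hab => if_neg (not_and_or.mpr hab)

theorem sum_blockPart {i : Fin t} {x : utAlg K n}
    (hx : ∀ a b : BIdx t n, a.1 ≠ i → (x : Matrix (BIdx t n) (BIdx t n) K) a b = 0) :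
    ∑ j, blockPart x i j = x := by
  ext a b
  simp only [AddSubmonoidClass.coe_finsetSum, Matrix.sum_apply, blockPart, of_apply]
  by_cases ha : a.1 = i
  · simp [ha]
  · simp [ha, hx a b ha]

theorem mem_iSup_blockM_of_blockOne_mul_of_mul_blockOne {i : Fin t} {x : utAlg K n}
    (hleft : blockOne K n i * x = x) (hright : x * blockOne K n i = 0) :
    x ∈ ⨆ j, ⨆ _ : i < j, blockM K n i j := by
  have hrow : ∀ a b : BIdx t n, a.1 ≠ i → (x : Matrix (BIdx t n) (BIdx t n) K) a b = 0 :=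
    fun a b ha => by rw [← hleft, blockOne_mul_apply, if_neg ha]
  rw [← sum_blockPart hrow]
  refine Submodule.sum_mem _ fun j _ => ?_
  by_cases hij : i < j
  · exact Submodule.mem_iSup_of_mem j (Submodule.mem_iSup_of_mem hij (blockPart_mem_blockM x i j))
  · suffices blockPart x i j = 0 by rw [this]; exact Submodule.zero_mem _
    ext a b
    change (if a.1 = i ∧ b.1 = j then _ else 0) = 0
    split_ifs with hab
    · obtain ⟨rfl, rfl⟩ := hab
      rcases (not_lt.mp hij).lt_or_eq with hlt | heq
      · exact x.2 hlt
      · have := congrArg (fun y : utAlg K n => (y : Matrix (BIdx t n) (BIdx t n) K) a b) hright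
        simpa [mul_blockOne_apply, heq] using this
    · rfl

end utAlg

open utAlg in
theorem idempotent_left_unit_conjugate_to_blockOne_general
    {K : Type*} [Field K] {t : ℕ} (n : Fin (t + 1) → ℕ)
    (u : utAlg K n)
    (huR : u ∈ ⨆ j : Fin (t + 1), blockM K n 0 j)
    (hlu : ∀ x ∈ ⨆ j : Fin (t + 1), blockM K n 0 j, u * x = x) :
    ∃ N : utAlg K n,
      N ∈ (⨆ j : Fin (t + 1), ⨆ _ : (0 : Fin (t + 1)) < j, blockM K n 0 j) ∧
      u = blockOne K n 0 + N ∧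
      N * N = 0 ∧
      ∃ φ : utAlg K n ≃ₐ[K] utAlg K n,
        (∀ x : utAlg K n, φ x = (1 - N) * x * (1 + N)) ∧
        φ (blockOne K n 0) = u := by
  set E := blockOne K n 0
  have huE : u * E = E := hlu E (blockOne_mem_iSup_blockM 0)
  have hEu : E * u = u := blockOne_mul_of_mem_iSup_blockM huR
  have hEN : E * (u - E) = u - E := by rw [mul_sub, hEu, blockOne_mul_blockOne]
  have hNE : (u - E) * E = 0 := by rw [sub_mul, huE, blockOne_mul_blockOne, sub_self]
  have hNN := mul_self_eq_zero_of_mul_eq_self_of_mul_eq_zero hEN hNE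
  refine ⟨u - E, mem_iSup_blockM_of_blockOne_mul_of_mul_blockOne hEN hNE,
    (add_sub_cancel E u).symm, hNN, innerAutOneSub K (u - E) hNN,
    innerAutOneSub_apply K (u - E) hNN, ?_⟩
  rw [innerAutOneSub_apply, one_sub_mul_mul_one_add_eq_add hEN hNE, add_sub_cancel]

/-- if `u` is an idempotent left unit of the first block row
`R = ⊕_j M_{1j}` of `U = UT(n_1,…,n_t)`, then `u = E_1 + n` with `n` strictly upper in the
first block row and `n² = 0`, and the inner automorphism `x ↦ (1−n)·x·(1+n)` of `U` maps
`E_1` to `u`; in particular some algebra automorphism of `U` maps `E_1` to `u`. -/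
theorem idempotent_left_unit_conjugate_to_blockOne
    {K : Type*} [Field K] {t : ℕ} (n : Fin (t + 1) → ℕ)
    (u : utAlg K n)
    (huR : u ∈ ⨆ j : Fin (t + 1), blockM K n 0 j)
    (hidem : u * u = u)
    (hlu : ∀ x ∈ ⨆ j : Fin (t + 1), blockM K n 0 j, u * x = x) :
    ∃ N : utAlg K n,
      N ∈ (⨆ j : Fin (t + 1), ⨆ _ : (0 : Fin (t + 1)) < j, blockM K n 0 j) ∧
      u = blockOne K n 0 + N ∧
      N * N = 0 ∧
      ∃ φ : utAlg K n ≃ₐ[K] utAlg K n,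
        (∀ x : utAlg K n, φ x = (1 - N) * x * (1 + N)) ∧
        φ (blockOne K n 0) = u :=
  idempotent_left_unit_conjugate_to_blockOne_general n u huR hlu
end
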